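/- (Compactness) Let Y^T_{f_k} := {g ∈ B^T_M | f_k ≤ g} and e ∈ {c, K3, N3, Nve}. Then Φ_e is compact on Y^T_{f_k}: for every Z ⊆ Y^T_{f_k}, if Φ_e(h₁) ∩ … ∩ Φ_e(hₙ) ≠ ∅ for all n ∈ ω and h₁,…,hₙ ∈ Z, then ⋂{Φ_e(h) | h ∈ Z} ≠ ∅. -/

import Mathlib

set_option autoImplicit false

/-! ### First-order syntax -/

structure Signature : Type 1 where
  Func : Type
  farity : Func → ℕ
  Pred : Type
  parity : Pred → ℕ

inductive Term (σ : Signature) : Type where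
  | var : ℕ → Term σ
  | func : (f : σ.Func) → (Fin (σ.farity f) → Term σ) → Term σ

namespace Term
variable {σ : Signature}

def vars : Term σ → Set ℕ
  | .var n => {n}
  | .func _ ts => ⋃ i, (ts i).vars

def subst (x : ℕ) (u : Term σ) : Term σ → Term σ
  | .var n => if n = x then u else .var n
  | .func f ts => .func f (fun i => Term.subst x u (ts i))

end Term

inductive Formula (σ : Signature) : Type where
  | eq : Term σ → Term σ → Formula σ
  | pred : (P : σ.Pred) → (Fin (σ.parity P) → Term σ) → Formula σ
  | neg : Formula σ → Formula σ
  | and : Formula σ → Formula σ → Formula σ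
  | imp : Formula σ → Formula σ → Formula σ
  | all : ℕ → Formula σ → Formula σ

namespace Formula
variable {σ : Signature}

def free : Formula σ → Set ℕ
  | .eq s t => s.vars ∪ t.vars
  | .pred _ ts => ⋃ i, (ts i).vars
  | .neg φ => φ.free
  | .and φ ψ => φ.free ∪ ψ.free
  | .imp φ ψ => φ.free ∪ ψ.free
  | .all x φ => φ.free \ {x}

/-- A sentence is a closed formula. -/
def IsSentence (φ : Formula σ) : Prop := φ.free = ∅

def subst (x : ℕ) (u : Term σ) : Formula σ → Formula σ
  | .eq s t => .eq (Term.subst x u s) (Term.subst x u t)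
  | .pred P ts => .pred P (fun i => Term.subst x u (ts i))
  | .neg φ => .neg (φ.subst x u)
  | .and φ ψ => .and (φ.subst x u) (ψ.subst x u)
  | .imp φ ψ => .imp (φ.subst x u) (ψ.subst x u)
  | .all y φ => if y = x then .all y φ else .all y (φ.subst x u)

def IsLiteral : Formula σ → Prop
  | .eq _ _ => True
  | .pred _ _ => True
  | .neg (.eq _ _) => True
  | .neg (.pred _ _) => True
  | _ => False

/-- `u` is substitutable ("free for") `x` in the given formula. -/
def FreeFor (u : Term σ) (x : ℕ) : Formula σ → Prop
  | .eq _ _ => True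
  | .pred _ _ => True
  | .neg φ => φ.FreeFor u x
  | .and φ ψ => φ.FreeFor u x ∧ ψ.FreeFor u x
  | .imp φ ψ => φ.FreeFor u x ∧ ψ.FreeFor u x
  | .all y φ => x = y ∨ x ∉ (Formula.all y φ).free ∨ (y ∉ u.vars ∧ φ.FreeFor u x)

/-- Conditional-free formulas (the fragment `L⁻`). -/
def ImpFree : Formula σ → Prop
  | .eq _ _ => True
  | .pred _ _ => True
  | .neg φ => φ.ImpFree
  | .and φ ψ => φ.ImpFree ∧ ψ.ImpFree
  | .imp _ _ => False
  | .all _ φ => φ.ImpFree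

/-- A canonical falsum: `∀x ¬(x = x)`. -/
def bot : Formula σ := .all 0 (.neg (.eq (.var 0) (.var 0)))

def iffF (φ ψ : Formula σ) : Formula σ := .and (.imp φ ψ) (.imp ψ φ)

def orF (φ ψ : Formula σ) : Formula σ := .neg (.and (.neg φ) (.neg ψ))

end Formula

/-! ### Strong Kleene interpretations and supervaluation structures -/

/-- A (partial, strong Kleene) interpretation on a domain `D`. -/
structure PInterp (σ : Signature) (D : Type) : Type where
  func : (f : σ.Func) → (Fin (σ.farity f) → D) → D
  pos : (P : σ.Pred) → Set (Fin (σ.parity P) → D)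
  neg : (P : σ.Pred) → Set (Fin (σ.parity P) → D)

namespace PInterp
variable {σ : Signature} {D : Type}

def Consistent (I : PInterp σ D) : Prop := ∀ P, I.pos P ∩ I.neg P = ∅

/-- Informational extension of interpretations. -/
def le (I J : PInterp σ D) : Prop := ∀ P, I.pos P ⊆ J.pos P ∧ I.neg P ⊆ J.neg P

end PInterp

def Term.val {σ : Signature} {D : Type} (I : PInterp σ D) (β : ℕ → D) : Term σ → D
  | .var n => β n
  | .func f ts => I.func f (fun i => (ts i).val I β)

section Sat
variable {σ : Signature} {D : Type} {ι : Type}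

/- Strong Kleene supervaluation satisfaction (truth, `SatP`) and falsity (`SatN`),
indexed by an abstract collection `ι` of points, an admissibility relation `R` on them
and an interpretation map `int`. -/
mutual
  def SatP (R : ι → ι → Prop) (int : ι → PInterp σ D) (w : ι) (β : ℕ → D) : Formula σ → Prop
    | .eq s t => s.val (int w) β = t.val (int w) β
    | .pred P ts => (fun i => (ts i).val (int w) β) ∈ (int w).pos P
    | .neg φ => SatN R int w β φ
    | .and φ ψ => SatP R int w β φ ∧ SatP R int w β ψ
    | .imp φ ψ => ∀ w', R w w' → SatP R int w' β φ → SatP R int w' β ψ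
    | .all x φ => ∀ d : D, SatP R int w (Function.update β x d) φ
  def SatN (R : ι → ι → Prop) (int : ι → PInterp σ D) (w : ι) (β : ℕ → D) : Formula σ → Prop
    | .eq s t => ¬ s.val (int w) β = t.val (int w) β
    | .pred P ts => (fun i => (ts i).val (int w) β) ∈ (int w).neg P
    | .neg φ => SatP R int w β φ
    | .and φ ψ => SatN R int w β φ ∨ SatN R int w β ψ
    | .imp φ ψ => SatP R int w β φ ∧ SatN R int w β ψ
    | .all x φ => ∃ d : D, SatN R int w (Function.update β x d) φ
end

end Sat

/-- A (strong Kleene) supervaluation structure. -/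
structure SupStructure (σ : Signature) (D : Type) where
  X : Set (PInterp σ D)
  H : PInterp σ D → PInterp σ D → Prop
  nonemptyD : Nonempty D
  agree : ∀ I ∈ X, ∀ J ∈ X, I.func = J.func
  Hmem : ∀ {I J : PInterp σ D}, H I J → I ∈ X ∧ J ∈ X
  Hrefl : ∀ I ∈ X, H I I
  Htrans : ∀ {I J K : PInterp σ D}, H I J → H J K → H I K
  Hle : ∀ {I J : PInterp σ D}, H I J → I.le J
  consistent : ∀ I ∈ X, I.Consistent

/-- Truth in a supervaluation structure at an interpretation under an assignment. -/
def SupStructure.Sat {σ : Signature} {D : Type} (M : SupStructure σ D)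
    (J : PInterp σ D) (β : ℕ → D) (φ : Formula σ) : Prop :=
  SatP M.H id J β φ

/-! ### The truth language `L_T` -/

/-- The signature `σ.T` extends `σ` by a unary truth predicate (the `none` predicate). -/
def Signature.T (σ : Signature) : Signature where
  Func := σ.Func
  farity := σ.farity
  Pred := Option σ.Pred
  parity := fun P => match P with
    | none => 1
    | some P => σ.parity P

def Term.liftT {σ : Signature} : Term σ → Term σ.T
  | .var n => .var n
  | .func f ts => .func (σ := σ.T) f (fun i => Term.liftT (ts i))

/-- The embedding of `L`-formulas into `L_T`-formulas. -/
def Formula.liftT {σ : Signature} : Formula σ → Formula σ.T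
  | .eq s t => .eq s.liftT t.liftT
  | .pred P ts => .pred (σ := σ.T) (some P) (fun i => Term.liftT (ts i))
  | .neg φ => .neg φ.liftT
  | .and φ ψ => .and φ.liftT ψ.liftT
  | .imp φ ψ => .imp φ.liftT ψ.liftT
  | .all x φ => .all x φ.liftT

/-- The truth predicate applied to a term: `T t`. -/
def Formula.Tp {σ : Signature} (t : Term σ.T) : Formula σ.T :=
  .pred (σ := σ.T) none (fun _ => t)

/-- The closed term given by a constant (i.e. `0`-ary function symbol). -/
def constTerm {σ : Signature} (c : σ.Func) (h : σ.farity c = 0) : Term σ :=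
  .func c (fun i => (Fin.cast h i).elim0)

/-! ### Valuations, basicness and admissibility -/

/-- A valuation assigns a set of `L_T`-sentences to every interpretation. -/
abbrev Val (σ : Signature) (D : Type) := PInterp σ D → Set (Formula σ.T)

/-- The pointwise ordering of valuations (on the interpretations of the structure). -/
def Val.le {σ : Signature} {D : Type} (M : SupStructure σ D) (f g : Val σ D) : Prop :=
  ∀ J ∈ M.X, f J ⊆ g J

/-- A basic valuation: consistent, sound for `L`-sentences and monotone along `H`. -/
structure IsBasic {σ : Signature} {D : Type} (M : SupStructure σ D) (f : Val σ D) : Prop where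
  sent : ∀ J ∈ M.X, ∀ φ ∈ f J, Formula.IsSentence φ
  consistent : ∀ J ∈ M.X, ∀ φ, φ ∈ f J → Formula.neg φ ∉ f J
  sound : ∀ J ∈ M.X, ∀ ψ : Formula σ, ψ.liftT ∈ f J → ∀ β, M.Sat J β ψ
  mono : ∀ {J J' : PInterp σ D}, M.H J J' → f J ⊆ f J'

/-- An admissibility condition on valuations. -/
structure IsAdmCond {σ : Signature} {D : Type} (M : SupStructure σ D)
    (Φ : Val σ D → Set (Val σ D)) : Prop where
  basic : ∀ {f g : Val σ D}, g ∈ Φ f → IsBasic M g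
  empty : ∀ f : Val σ D, ¬ IsBasic M f → Φ f = ∅
  anti : ∀ {f g : Val σ D}, IsBasic M f → Val.le M f g → Φ g ⊆ Φ f
  le_of_mem : ∀ {f g : Val σ D}, g ∈ Φ f → Val.le M f g

/-- The truth interpretation `J_f`: it interprets the truth predicate by `S`
(via the coding `code` of sentences into the domain) and otherwise agrees with `J`. -/
def truthInterp {σ : Signature} {D : Type} (code : Formula σ.T → D)
    (J : PInterp σ D) (S : Set (Formula σ.T)) : PInterp σ.T D where
  func := J.func
  pos := fun P => match P with
    | none => {v | ∃ φ ∈ S, v = fun _ => code φ}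
    | some P => J.pos P
  neg := fun P => match P with
    | none => {v | ∃ φ : Formula σ.T, Formula.neg φ ∈ S ∧ v = fun _ => code φ}
    | some P => J.neg P

/-- Worlds of a truth structure: pairs of an interpretation and a valuation. -/
abbrev TWorld (σ : Signature) (D : Type) := PInterp σ D × Val σ D

/-- The admissibility relation `H_Φ` on truth interpretations, restricted to `X × Y`. -/
def HPhi {σ : Signature} {D : Type} (M : SupStructure σ D) (Φ : Val σ D → Set (Val σ D))
    (Y : Set (Val σ D)) : TWorld σ D → TWorld σ D → Prop :=
  fun p q => p.2 ∈ Y ∧ q.2 ∈ Y ∧ M.H p.1 q.1 ∧ q.2 ∈ Φ p.2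

/-- Satisfaction in the truth structure `(D, X × Y, H_Φ)` at the truth interpretation `J_f`. -/
def TSat {σ : Signature} {D : Type} (M : SupStructure σ D) (Φ : Val σ D → Set (Val σ D))
    (code : Formula σ.T → D) (Y : Set (Val σ D)) (J : PInterp σ D) (f : Val σ D)
    (β : ℕ → D) (φ : Formula σ.T) : Prop :=
  SatP (HPhi M Φ Y) (fun p : TWorld σ D => truthInterp code p.1 (p.2 p.1)) (J, f) β φ

/-! ### The operations `θ` and `Θ`, grounded truth sets -/

/-- The jump `θ_M^Φ(Y, f)`: the valuation collecting the sentences true at `J_f`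
in the truth structure `(D, X × Y, H_Φ)`. -/
def theta {σ : Signature} {D : Type} (M : SupStructure σ D) (Φ : Val σ D → Set (Val σ D))
    (code : Formula σ.T → D) (Y : Set (Val σ D)) (f : Val σ D) : Val σ D :=
  fun J => {φ | Formula.IsSentence φ ∧ ∀ β, TSat M Φ code Y J f β φ}

/-- The operation `Θ_M^Φ(Y_f)`. -/
def Theta {σ : Signature} {D : Type} (M : SupStructure σ D) (Φ : Val σ D → Set (Val σ D))
    (code : Formula σ.T → D) (Y : Set (Val σ D)) (f : Val σ D) : Set (Val σ D) :=
  {g | g ∈ Y ∧ Val.le M (theta M Φ code Y f) g}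

/-- `Y` is a grounded truth set with `≤`-minimal element `f`. -/
def Grounded {σ : Signature} {D : Type} (M : SupStructure σ D) (Φ : Val σ D → Set (Val σ D))
    (Y : Set (Val σ D)) (f : Val σ D) : Prop :=
  (∀ g ∈ Y, IsBasic M g) ∧ f ∈ Y ∧ (∀ g ∈ Y, Val.le M f g) ∧ (Y ∩ Φ f).Nonempty

/-- `Y ∈ Adm_M`: `Y` is a grounded truth set (for some minimal valuation). -/
def IsAdm {σ : Signature} {D : Type} (M : SupStructure σ D) (Φ : Val σ D → Set (Val σ D))
    (Y : Set (Val σ D)) : Prop :=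
  ∃ f, Grounded M Φ Y f

/-! ### Sequent calculi: `K3`, `N3` (flag `hImp`) and `K3T` (flag `hT`) -/

/-- Sequent derivability for the logics of the paper, over the language `L_T`.
`hImp = true` adds the `N3` conditional rules, `hT = true` adds the naive truth rules
(`qt φ` is the quotation name `⌜φ⌝`).  Identity is classical throughout. -/
inductive Deriv {σ : Signature} (qt : Formula σ.T → Term σ.T) (hImp hT : Bool) :
    Set (Formula σ.T) → Set (Formula σ.T) → Prop where
  | ax {Γ Δ : Set (Formula σ.T)} {φ} : φ.IsLiteral →
      Deriv qt hImp hT (insert φ Γ) (insert φ Δ)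
  | cut {Γ Δ φ} : Deriv qt hImp hT Γ (insert φ Δ) → Deriv qt hImp hT (insert φ Γ) Δ →
      Deriv qt hImp hT Γ Δ
  | negL {Γ Δ χ} : χ.IsLiteral → Deriv qt hImp hT Γ (insert χ Δ) →
      Deriv qt hImp hT (insert (.neg χ) Γ) Δ
  | dnL {Γ Δ φ} : Deriv qt hImp hT (insert φ Γ) Δ →
      Deriv qt hImp hT (insert (.neg (.neg φ)) Γ) Δ
  | dnR {Γ Δ φ} : Deriv qt hImp hT Γ (insert φ Δ) →
      Deriv qt hImp hT Γ (insert (.neg (.neg φ)) Δ)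
  | nconjL {Γ Δ φ ψ} : Deriv qt hImp hT (insert (.neg φ) Γ) Δ →
      Deriv qt hImp hT (insert (.neg ψ) Γ) Δ →
      Deriv qt hImp hT (insert (.neg (.and φ ψ)) Γ) Δ
  | nconjR₁ {Γ Δ φ ψ} : Deriv qt hImp hT Γ (insert (.neg φ) Δ) →
      Deriv qt hImp hT Γ (insert (.neg (.and φ ψ)) Δ)
  | nconjR₂ {Γ Δ φ ψ} : Deriv qt hImp hT Γ (insert (.neg ψ) Δ) →
      Deriv qt hImp hT Γ (insert (.neg (.and φ ψ)) Δ)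
  | conjL₁ {Γ Δ φ ψ} : Deriv qt hImp hT (insert φ Γ) Δ →
      Deriv qt hImp hT (insert (.and φ ψ) Γ) Δ
  | conjL₂ {Γ Δ φ ψ} : Deriv qt hImp hT (insert ψ Γ) Δ →
      Deriv qt hImp hT (insert (.and φ ψ) Γ) Δ
  | conjR {Γ Δ φ ψ} : Deriv qt hImp hT Γ (insert φ Δ) → Deriv qt hImp hT Γ (insert ψ Δ) →
      Deriv qt hImp hT Γ (insert (.and φ ψ) Δ)
  | nallL {Γ Δ} {v y : ℕ} {φ : Formula σ.T} :
      (∀ ψ ∈ Γ, y ∉ Formula.free ψ) → (∀ ψ ∈ Δ, y ∉ Formula.free ψ) →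
      y ∉ (Formula.all v φ).free → φ.FreeFor (.var y) v →
      Deriv qt hImp hT (insert (.neg (φ.subst v (.var y))) Γ) Δ →
      Deriv qt hImp hT (insert (.neg (.all v φ)) Γ) Δ
  | nallR {Γ Δ} {v : ℕ} {t : Term σ.T} {φ : Formula σ.T} : φ.FreeFor t v →
      Deriv qt hImp hT Γ (insert (.neg (φ.subst v t)) (insert (.neg (.all v φ)) Δ)) →
      Deriv qt hImp hT Γ (insert (.neg (.all v φ)) Δ)
  | allL {Γ Δ} {v : ℕ} {t : Term σ.T} {φ : Formula σ.T} : φ.FreeFor t v →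
      Deriv qt hImp hT (insert (φ.subst v t) (insert (.all v φ) Γ)) Δ →
      Deriv qt hImp hT (insert (.all v φ) Γ) Δ
  | allR {Γ Δ} {v y : ℕ} {φ : Formula σ.T} :
      (∀ ψ ∈ Γ, y ∉ Formula.free ψ) → (∀ ψ ∈ Δ, y ∉ Formula.free ψ) →
      y ∉ (Formula.all v φ).free → φ.FreeFor (.var y) v →
      Deriv qt hImp hT Γ (insert (φ.subst v (.var y)) Δ) →
      Deriv qt hImp hT Γ (insert (.all v φ) Δ)
  | idRefl {Γ Δ t} : Deriv qt hImp hT (insert (.eq t t) Γ) Δ → Deriv qt hImp hT Γ Δ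
  | idNeqR {Γ Δ s t} : Deriv qt hImp hT (insert (.eq s t) Γ) Δ →
      Deriv qt hImp hT Γ (insert (.neg (.eq s t)) Δ)
  | idRep {Γ Δ} {x : ℕ} {s t : Term σ.T} {φ : Formula σ.T} : φ.FreeFor s x → φ.FreeFor t x →
      Deriv qt hImp hT (insert (φ.subst x t) Γ) Δ →
      Deriv qt hImp hT (insert (.eq s t) (insert (φ.subst x s) Γ)) Δ
  | nimpL₁ {Γ Δ φ ψ} : hImp = true → Deriv qt hImp hT (insert φ Γ) Δ →
      Deriv qt hImp hT (insert (.neg (.imp φ ψ)) Γ) Δ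
  | nimpL₂ {Γ Δ φ ψ} : hImp = true → Deriv qt hImp hT (insert (.neg ψ) Γ) Δ →
      Deriv qt hImp hT (insert (.neg (.imp φ ψ)) Γ) Δ
  | nimpR {Γ Δ φ ψ} : hImp = true → Deriv qt hImp hT Γ (insert φ Δ) →
      Deriv qt hImp hT Γ (insert (.neg ψ) Δ) →
      Deriv qt hImp hT Γ (insert (.neg (.imp φ ψ)) Δ)
  | impL {Γ Δ φ ψ} : hImp = true → Deriv qt hImp hT Γ (insert φ Δ) →
      Deriv qt hImp hT (insert ψ Γ) Δ →
      Deriv qt hImp hT (insert (.imp φ ψ) Γ) Δ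
  | impR {Γ Δ φ ψ} : hImp = true → Deriv qt hImp hT (insert φ Γ) {ψ} →
      Deriv qt hImp hT Γ (insert (.imp φ ψ) Δ)
  | tL {Γ Δ φ} : hT = true → Deriv qt hImp hT (insert φ Γ) Δ →
      Deriv qt hImp hT (insert (.Tp (qt φ)) Γ) Δ
  | tR {Γ Δ φ} : hT = true → Deriv qt hImp hT Γ (insert φ Δ) →
      Deriv qt hImp hT Γ (insert (.Tp (qt φ)) Δ)
  | tnL {Γ Δ φ} : hT = true → Deriv qt hImp hT (insert (.neg φ) Γ) Δ →
      Deriv qt hImp hT (insert (.neg (.Tp (qt φ))) Γ) Δ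
  | tnR {Γ Δ φ} : hT = true → Deriv qt hImp hT Γ (insert (.neg φ) Δ) →
      Deriv qt hImp hT Γ (insert (.neg (.Tp (qt φ))) Δ)

/-- A set of `L_T`-sentences is saturated for the given calculus. -/
def SatSet {σ : Signature} (qt : Formula σ.T → Term σ.T) (hImp hT : Bool)
    (S : Set (Formula σ.T)) : Prop :=
  ∀ Γ Δ : Set (Formula σ.T), Γ.Finite → Γ ⊆ S → Deriv qt hImp hT Γ Δ → (Δ ∩ S).Nonempty

/-- A valuation is `L`-saturated iff all its values are. -/
def ValSaturated {σ : Signature} {D : Type} (M : SupStructure σ D)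
    (qt : Formula σ.T → Term σ.T) (hImp hT : Bool) (f : Val σ D) : Prop :=
  ∀ J ∈ M.X, SatSet qt hImp hT (f J)

/-- The four admissibility conditions of the paper. -/
inductive AdmE : Type
  | c | k3 | n3 | nve

/-- `Φ_c`, `Φ_K3`, `Φ_N3` and `Φ_Nve`. -/
def PhiE {σ : Signature} {D : Type} (M : SupStructure σ D) (qt : Formula σ.T → Term σ.T) :
    AdmE → Val σ D → Set (Val σ D)
  | .c, f => {g | IsBasic M f ∧ IsBasic M g ∧ Val.le M f g}
  | .k3, f => {g | IsBasic M f ∧ IsBasic M g ∧ Val.le M f g ∧ ValSaturated M qt false false g}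
  | .n3, f => {g | IsBasic M f ∧ IsBasic M g ∧ Val.le M f g ∧ ValSaturated M qt true false g}
  | .nve, f => {g | IsBasic M f ∧ IsBasic M g ∧ Val.le M f g ∧ ValSaturated M qt false true g}

/-- `B^T_M`: basic valuations whose values are `K3`-saturated and whose conditional-free
parts are `K3T`-saturated. -/
def BT {σ : Signature} {D : Type} (M : SupStructure σ D) (qt : Formula σ.T → Term σ.T) :
    Set (Val σ D) :=
  {f | IsBasic M f ∧ ∀ J ∈ M.X,
    SatSet qt false true {φ | φ ∈ f J ∧ φ.ImpFree} ∧ SatSet qt false false (f J)}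

/-! ### The Kripke jump `K` and the valuation `f_k` -/

/-- Membership condition for the one-step strong Kleene truth jump `K` relative to `J`. -/
def KMem {σ : Signature} {D : Type} (J : PInterp σ D) (code : Formula σ.T → D)
    (β₀ : ℕ → D) (S : Set (Formula σ.T)) : Formula σ.T → Prop
  | .eq s t => Term.val (truthInterp code J ∅) β₀ s = Term.val (truthInterp code J ∅) β₀ t
  | .pred none ts => ∃ ψ ∈ S,
      (fun i => Term.val (truthInterp code J ∅) β₀ (ts i)) = fun _ => code ψ
  | .pred (some P) ts => (fun i => Term.val (truthInterp code J ∅) β₀ (ts i)) ∈ J.pos P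
  | .neg (.eq s t) =>
      ¬ Term.val (truthInterp code J ∅) β₀ s = Term.val (truthInterp code J ∅) β₀ t
  | .neg (.pred none ts) => ∃ ψ : Formula σ.T, Formula.neg ψ ∈ S ∧
      (fun i => Term.val (truthInterp code J ∅) β₀ (ts i)) = fun _ => code ψ
  | .neg (.pred (some P) ts) => (fun i => Term.val (truthInterp code J ∅) β₀ (ts i)) ∈ J.neg P
  | .neg (.neg φ) => φ ∈ S
  | .neg (.and φ ψ) => Formula.neg φ ∈ S ∨ Formula.neg ψ ∈ S
  | .neg (.imp _ _) => False
  | .neg (.all v φ) => ∃ (c : σ.Func) (h : σ.farity c = 0),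
      Formula.neg (φ.subst v (constTerm (σ := σ.T) c h)) ∈ S
  | .and φ ψ => φ ∈ S ∧ ψ ∈ S
  | .imp _ _ => False
  | .all v φ => ∀ (c : σ.Func) (h : σ.farity c = 0), φ.subst v (constTerm (σ := σ.T) c h) ∈ S

/-- The strong Kleene truth jump relative to `J`. -/
def KJump {σ : Signature} {D : Type} (J : PInterp σ D) (code : Formula σ.T → D)
    (β₀ : ℕ → D) (S : Set (Formula σ.T)) : Set (Formula σ.T) :=
  {φ | Formula.IsSentence φ ∧ KMem J code β₀ S φ}

/-- The valuation `f_k`: at each interpretation `J` it is the minimal fixed point of the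
strong Kleene truth jump over the `K3`-truths of `J`. -/
noncomputable def fk {σ : Signature} {D : Type} (M : SupStructure σ D)
    (code : Formula σ.T → D) : Val σ D :=
  fun J => ⋂₀ {S | KJump J code (fun _ => M.nonemptyD.some) S ⊆ S}

/-! ### Compactness, coding assumptions and Kripkean truth structures -/

/-- `Φ` is compact on `Y`. -/
def CompactOn {σ : Signature} {D : Type} (Φ : Val σ D → Set (Val σ D))
    (Y : Set (Val σ D)) : Prop :=
  ∀ Z ⊆ Y, (∀ (n : ℕ) (h : Fin n → Val σ D), (∀ i, h i ∈ Z) → (⋂ i, Φ (h i)).Nonempty) →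
    (⋂ g ∈ Z, Φ g).Nonempty

/-- Standing assumptions on the coding apparatus: `code φ` is the denotation of the
quotation name `⌜φ⌝ = qt φ`, names are closed and denote rigidly, distinct sentences have
distinct codes, and every element of the domain is named by a constant. -/
structure GoodCoding {σ : Signature} {D : Type} (M : SupStructure σ D)
    (code : Formula σ.T → D) (qt : Formula σ.T → Term σ.T) : Prop where
  inj : Function.Injective code
  closed : ∀ φ, (qt φ).vars = ∅
  val : ∀ (φ : Formula σ.T) (J : PInterp σ D) (S : Set (Formula σ.T)) (β : ℕ → D),
      Term.val (truthInterp code J S) β (qt φ) = code φ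
  names : ∀ d : D, ∃ (c : σ.Func) (h : σ.farity c = 0),
      ∀ (J : PInterp σ D) (S : Set (Formula σ.T)) (β : ℕ → D),
        Term.val (truthInterp code J S) β (constTerm (σ := σ.T) c h) = d

/-- A Kripkean truth structure: a grounded truth structure with `Y ⊆ B^T_M` whose
minimal valuation is a fixed point of `θ` and whose truth set is a fixed point of `Θ`. -/
def IsKripkean {σ : Signature} {D : Type} (M : SupStructure σ D)
    (Φ : Val σ D → Set (Val σ D)) (code : Formula σ.T → D) (qt : Formula σ.T → Term σ.T)
    (Y : Set (Val σ D)) (f : Val σ D) : Prop :=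
  Grounded M Φ Y f ∧ Y ⊆ BT M qt ∧ theta M Φ code Y f = f ∧ Theta M Φ code Y f = Y

/-- A naive valuation (relative to the quotation function `qt`). -/
def NaiveVal {σ : Signature} {D : Type} (M : SupStructure σ D)
    (qt : Formula σ.T → Term σ.T) (g : Val σ D) : Prop :=
  ∀ J ∈ M.X, ∀ φ : Formula σ.T,
    (φ ∈ g J ↔ Formula.Tp (qt φ) ∈ g J) ∧
    (Formula.neg φ ∈ g J ↔ Formula.neg (Formula.Tp (qt φ)) ∈ g J)

/-- The admissibility condition `Φ_{N3-Nve}` requiring admissible precisifications to be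
`N3`-saturated and naive. -/
def PhiN3Nve {σ : Signature} {D : Type} (M : SupStructure σ D)
    (qt : Formula σ.T → Term σ.T) (f : Val σ D) : Set (Val σ D) :=
  {g | IsBasic M f ∧ IsBasic M g ∧ Val.le M f g ∧
    ValSaturated M qt true false g ∧ NaiveVal M qt g}

/-- `(Y, f)` is `θ^Φ`-sound. -/
def ThetaSound {σ : Signature} {D : Type} (M : SupStructure σ D)
    (Φ : Val σ D → Set (Val σ D)) (code : Formula σ.T → D)
    (Y : Set (Val σ D)) (f : Val σ D) : Prop :=
  Y = {g | IsBasic M g ∧ Val.le M f g} ∧ CompactOn Φ Y ∧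
    Val.le M f (theta M Φ code Y f) ∧
    ∀ g ∈ Y, Val.le M g (theta M Φ code Y g) → theta M Φ code Y g ∈ Y →
      (Y ∩ Φ (theta M Φ code Y g)).Nonempty

/-- `A ⊆ ℕ` is `Π¹₁` (via Kleene's normal form). -/
def IsPi11 (A : Set ℕ) : Prop :=
  ∃ R : List ℕ → ℕ → Bool, Computable₂ R ∧
    ∀ n, n ∈ A ↔ ∀ l : ℕ → ℕ, ∃ k₀ : ℕ, ∀ k ≥ k₀, R ((List.range k).map l) n = false

/-! ### Transfinite iteration of `θ` and `Θ` -/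

open Classical in
/-- The simultaneous transfinite iteration `α ↦ (θ^α(Y_f, f), Θ^α(Y_f))`. -/
noncomputable def iter {σ : Signature} {D : Type} (M : SupStructure σ D)
    (Φ : Val σ D → Set (Val σ D)) (code : Formula σ.T → D)
    (Y₀ : Set (Val σ D)) (f₀ : Val σ D) (α : Ordinal.{0}) :
    Val σ D × Set (Val σ D) :=
  Ordinal.limitRecOn α (f₀, Y₀)
    (fun _ p =>
      letI t := theta M Φ code p.2 p.1
      (t, if IsAdm M Φ p.2 then {g | g ∈ p.2 ∧ Val.le M t g} else ∅))
    (fun o _ ih =>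
      letI t : Val σ D := fun J => ⋃ (β : {β : Ordinal.{0} // β < o}), (ih β.1 β.2).1 J
      (t, {g | (∀ β : Ordinal.{0}, ∀ h : β < o, g ∈ (ih β h).2) ∧ Val.le M t g}))

/-!
For every finite `s ⊆ Z` choose a common `Φ_e`-extension `g_s` of the members of `s`, and let
`g` be the ultralimit of the `g_s` along an ultrafilter on the finite subsets of `Z` that
refines inclusion: `φ ∈ g(J)` iff `φ ∈ g_s(J)` for almost all `s`. Since almost all `s`
contain a given `h ∈ Z`, basicness and `h ≤ g_s` pass to `g` pointwise. Saturation passes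
too, because a derivable sequent `Γ ⇒ Δ` has a derivable finite part `Γ ⇒ Δ₀`, and an
ultrafilter picks one of the finitely many alternatives in `Δ₀`.
-/

open Set Filter

section Finiteness

variable {σ : Signature} {qt : Formula σ.T → Term σ.T} {hImp hT : Bool}

/-- The calculus has no right weakening (the eigenvariable conditions mention `Δ`), so instead
of a single finite derivable part we record derivability of every truncation `Δ ∩ S` with
`S ⊇ Δ₀`. -/
def RightFinitary (qt : Formula σ.T → Term σ.T) (hImp hT : Bool)
    (Γ Δ : Set (Formula σ.T)) : Prop :=
  ∃ Δ₀ : Set (Formula σ.T), Δ₀.Finite ∧ ∀ S, Δ₀ ⊆ S → Deriv qt hImp hT Γ (Δ ∩ S)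

namespace RightFinitary

variable {Γ Γ₁ Γ₂ Γ' Δ Δ₁ Δ₂ Δ' : Set (Formula σ.T)} {a a₁ a₂ b : Formula σ.T}

theorem of_premise (A : Set (Formula σ.T)) (hA : A.Finite)
    (h : RightFinitary qt hImp hT Γ Δ)
    (rule : ∀ S, A ⊆ S → Deriv qt hImp hT Γ (Δ ∩ S) → Deriv qt hImp hT Γ' (Δ' ∩ S)) :
    RightFinitary qt hImp hT Γ' Δ' :=
  let ⟨Δ₀, hΔ₀, hd⟩ := h
  ⟨Δ₀ ∪ A, hΔ₀.union hA, fun S hS =>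
    rule S (subset_union_right.trans hS) (hd S (subset_union_left.trans hS))⟩

theorem of_premise₂ (A : Set (Formula σ.T)) (hA : A.Finite)
    (h₁ : RightFinitary qt hImp hT Γ₁ Δ₁) (h₂ : RightFinitary qt hImp hT Γ₂ Δ₂)
    (rule : ∀ S, A ⊆ S → Deriv qt hImp hT Γ₁ (Δ₁ ∩ S) → Deriv qt hImp hT Γ₂ (Δ₂ ∩ S) →
      Deriv qt hImp hT Γ' (Δ' ∩ S)) :
    RightFinitary qt hImp hT Γ' Δ' := by
  obtain ⟨Δ₀, hΔ₀, hd⟩ := h₂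
  refine h₁.of_premise (A ∪ Δ₀) (hA.union hΔ₀) fun S hS d₁ => ?_
  exact rule S (subset_union_left.trans hS) d₁ (hd S (subset_union_right.trans hS))

theorem principal (rule : ∀ Δr ⊆ Δ, Deriv qt hImp hT Γ (insert a Δr)) :
    RightFinitary qt hImp hT Γ (insert a Δ) :=
  ⟨{a}, finite_singleton a, fun _ hS => by
    rw [insert_inter_of_mem (singleton_subset_iff.1 hS)]
    exact rule _ inter_subset_left⟩

theorem left (h : RightFinitary qt hImp hT Γ Δ)
    (rule : ∀ Δr ⊆ Δ, Deriv qt hImp hT Γ Δr → Deriv qt hImp hT Γ' Δr) :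
    RightFinitary qt hImp hT Γ' Δ :=
  h.of_premise ∅ finite_empty fun _ _ => rule _ inter_subset_left

theorem left₂ (h₁ : RightFinitary qt hImp hT Γ₁ Δ) (h₂ : RightFinitary qt hImp hT Γ₂ Δ)
    (rule : ∀ Δr ⊆ Δ, Deriv qt hImp hT Γ₁ Δr → Deriv qt hImp hT Γ₂ Δr →
      Deriv qt hImp hT Γ' Δr) :
    RightFinitary qt hImp hT Γ' Δ :=
  of_premise₂ ∅ finite_empty h₁ h₂ fun _ _ => rule _ inter_subset_left

theorem cut (h₁ : RightFinitary qt hImp hT Γ₁ (insert a Δ)) (h₂ : RightFinitary qt hImp hT Γ₂ Δ)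
    (rule : ∀ Δr ⊆ Δ, Deriv qt hImp hT Γ₁ (insert a Δr) → Deriv qt hImp hT Γ₂ Δr →
      Deriv qt hImp hT Γ' Δr) :
    RightFinitary qt hImp hT Γ' Δ :=
  of_premise₂ {a} (finite_singleton a) h₁ h₂ fun _ hS d₁ =>
    rule _ inter_subset_left (insert_inter_of_mem (singleton_subset_iff.1 hS) ▸ d₁)

theorem drop (h : RightFinitary qt hImp hT Γ (insert a Δ))
    (rule : ∀ Δr ⊆ Δ, Deriv qt hImp hT Γ (insert a Δr) → Deriv qt hImp hT Γ' Δr) :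
    RightFinitary qt hImp hT Γ' Δ :=
  h.of_premise {a} (finite_singleton a) fun _ hS d =>
    rule _ inter_subset_left (insert_inter_of_mem (singleton_subset_iff.1 hS) ▸ d)

theorem introduce (h : RightFinitary qt hImp hT Γ Δ)
    (rule : ∀ Δr ⊆ Δ, Deriv qt hImp hT Γ Δr → Deriv qt hImp hT Γ' (insert b Δr)) :
    RightFinitary qt hImp hT Γ' (insert b Δ) :=
  h.of_premise {b} (finite_singleton b) fun _ hS d => by
    rw [insert_inter_of_mem (singleton_subset_iff.1 hS)]
    exact rule _ inter_subset_left d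

theorem right (h : RightFinitary qt hImp hT Γ (insert a Δ))
    (rule : ∀ Δr ⊆ Δ, Deriv qt hImp hT Γ (insert a Δr) → Deriv qt hImp hT Γ' (insert b Δr)) :
    RightFinitary qt hImp hT Γ' (insert b Δ) :=
  h.of_premise {a, b} (toFinite _) fun S hS d => by
    rw [insert_inter_of_mem (hS (by simp))] at d ⊢
    exact rule _ inter_subset_left d

theorem right₂ (h₁ : RightFinitary qt hImp hT Γ₁ (insert a₁ Δ))
    (h₂ : RightFinitary qt hImp hT Γ₂ (insert a₂ Δ))
    (rule : ∀ Δr ⊆ Δ, Deriv qt hImp hT Γ₁ (insert a₁ Δr) → Deriv qt hImp hT Γ₂ (insert a₂ Δr) →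
      Deriv qt hImp hT Γ' (insert b Δr)) :
    RightFinitary qt hImp hT Γ' (insert b Δ) :=
  of_premise₂ {a₁, a₂, b} (toFinite _) h₁ h₂ fun S hS d₁ d₂ => by
    rw [insert_inter_of_mem (hS (by simp))] at d₁ d₂ ⊢
    exact rule _ inter_subset_left d₁ d₂

end RightFinitary

theorem Deriv.rightFinitary {Γ Δ : Set (Formula σ.T)} (d : Deriv qt hImp hT Γ Δ) :
    RightFinitary qt hImp hT Γ Δ := by
  induction d with
  | ax hlit => exact .principal fun _ _ => .ax hlit
  | cut _ _ ih₁ ih₂ => exact ih₁.cut ih₂ fun _ _ => .cut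
  | negL hlit _ ih => exact ih.drop fun _ _ => .negL hlit
  | dnL _ ih => exact ih.left fun _ _ => .dnL
  | dnR _ ih => exact ih.right fun _ _ => .dnR
  | nconjL _ _ ih₁ ih₂ => exact ih₁.left₂ ih₂ fun _ _ => .nconjL
  | nconjR₁ _ ih => exact ih.right fun _ _ => .nconjR₁
  | nconjR₂ _ ih => exact ih.right fun _ _ => .nconjR₂
  | conjL₁ _ ih => exact ih.left fun _ _ => .conjL₁
  | conjL₂ _ ih => exact ih.left fun _ _ => .conjL₂
  | conjR _ _ ih₁ ih₂ => exact ih₁.right₂ ih₂ fun _ _ => .conjR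
  | nallL hΓ hΔ hy hff _ ih =>
      exact ih.left fun _ hΔr => .nallL hΓ (fun ψ hψ => hΔ ψ (hΔr hψ)) hy hff
  | @nallR Γ Δ v t φ hff _ ih =>
      refine ih.of_premise {.neg (φ.subst v t), .neg (.all v φ)} (toFinite _) fun S hS d => ?_
      rw [insert_inter_of_mem (hS (by simp)), insert_inter_of_mem (hS (by simp))] at d
      rw [insert_inter_of_mem (hS (by simp))]
      exact .nallR hff d
  | allL hff _ ih => exact ih.left fun _ _ => .allL hff
  | allR hΓ hΔ hy hff _ ih =>
      exact ih.right fun _ hΔr => .allR hΓ (fun ψ hψ => hΔ ψ (hΔr hψ)) hy hff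
  | idRefl _ ih => exact ih.left fun _ _ => .idRefl
  | idNeqR _ ih => exact ih.introduce fun _ _ => .idNeqR
  | idRep hs ht _ ih => exact ih.left fun _ _ => .idRep hs ht
  | nimpL₁ hi _ ih => exact ih.left fun _ _ => .nimpL₁ hi
  | nimpL₂ hi _ ih => exact ih.left fun _ _ => .nimpL₂ hi
  | nimpR hi _ _ ih₁ ih₂ => exact ih₁.right₂ ih₂ fun _ _ => .nimpR hi
  | impL hi _ _ ih₁ ih₂ => exact ih₁.cut ih₂ fun _ _ => .impL hi
  | impR hi d _ => exact .principal fun _ _ => .impR hi d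
  | tL ht _ ih => exact ih.left fun _ _ => .tL ht
  | tR ht _ ih => exact ih.right fun _ _ => .tR ht
  | tnL ht _ ih => exact ih.left fun _ _ => .tnL ht
  | tnR ht _ ih => exact ih.right fun _ _ => .tnR ht

theorem Deriv.exists_finite_subset {Γ Δ : Set (Formula σ.T)} (d : Deriv qt hImp hT Γ Δ) :
    ∃ Δ₀ ⊆ Δ, Δ₀.Finite ∧ Deriv qt hImp hT Γ Δ₀ :=
  let ⟨Δ₀, hΔ₀, hd⟩ := d.rightFinitary
  ⟨Δ ∩ Δ₀, inter_subset_left, hΔ₀.inter_of_right Δ, hd Δ₀ subset_rfl⟩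

end Finiteness

section Ultralimit

variable {σ : Signature} {D : Type} {ι : Type*} {M : SupStructure σ D} {qt : Formula σ.T → Term σ.T}
  {hImp hT : Bool} {U : Ultrafilter ι}

theorem SatSet.ultralimit {F : ι → Set (Formula σ.T)}
    (hF : ∀ᶠ i in U, SatSet qt hImp hT (F i)) :
    SatSet qt hImp hT {φ | ∀ᶠ i in U, φ ∈ F i} := by
  intro Γ Δ hΓ hΓF d
  obtain ⟨Δ₀, hΔ₀Δ, hΔ₀, d₀⟩ := d.exists_finite_subset
  have hΓ_eventually : ∀ᶠ i in U, Γ ⊆ F i := (hΓ.eventually_all).2 hΓF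
  have hΔ₀_eventually : ∀ᶠ i in U, ∃ δ ∈ Δ₀, δ ∈ F i :=
    (hΓ_eventually.and hF).mono fun i ⟨hΓi, hi⟩ => hi Γ Δ₀ hΓ hΓi d₀
  obtain ⟨δ, hδ, hδF⟩ := (Ultrafilter.eventually_exists_mem_iff hΔ₀).1 hΔ₀_eventually
  exact ⟨δ, hΔ₀Δ hδ, hδF⟩

def Val.ultralimit (U : Ultrafilter ι) (G : ι → Val σ D) : Val σ D :=
  fun J => {φ | ∀ᶠ i in U, φ ∈ G i J}

variable {G : ι → Val σ D}

theorem ValSaturated.ultralimit (hG : ∀ᶠ i in U, ValSaturated M qt hImp hT (G i)) :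
    ValSaturated M qt hImp hT (Val.ultralimit U G) :=
  fun J hJ => SatSet.ultralimit (hG.mono fun _ hi => hi J hJ)

theorem IsBasic.ultralimit (hG : ∀ᶠ i in U, IsBasic M (G i)) :
    IsBasic M (Val.ultralimit U G) where
  sent J hJ φ hφ :=
    let ⟨_, hφi, hi⟩ := (hφ.and hG).exists
    hi.sent J hJ φ hφi
  consistent J hJ φ hφ hnφ :=
    let ⟨_, hφi, hnφi, hi⟩ := (hφ.and (hnφ.and hG)).exists
    hi.consistent J hJ φ hφi hnφi
  sound J hJ ψ hψ β :=
    let ⟨_, hψi, hi⟩ := (hψ.and hG).exists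
    hi.sound J hJ ψ hψi β
  mono hH _ hφ := (hφ.and hG).mono fun _ ⟨hφi, hi⟩ => hi.mono hH hφi

theorem Val.le_ultralimit {f : Val σ D} (hG : ∀ᶠ i in U, Val.le M f (G i)) :
    Val.le M f (Val.ultralimit U G) :=
  fun J hJ _ hφ => hG.mono fun _ hi => hi J hJ hφ

theorem PhiE_subset_PhiE_c (e : AdmE) (f : Val σ D) : PhiE M qt e f ⊆ PhiE M qt .c f := by
  intro g hg
  cases e
  case c => exact hg
  all_goals exact ⟨hg.1, hg.2.1, hg.2.2.1⟩

theorem ultralimit_mem_PhiE {e : AdmE} {f : Val σ D} (hG : ∀ᶠ i in U, G i ∈ PhiE M qt e f) :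
    Val.ultralimit U G ∈ PhiE M qt e f := by
  have hG_c : ∀ᶠ i in U, G i ∈ PhiE M qt .c f := hG.mono fun _ hi => PhiE_subset_PhiE_c e f hi
  obtain ⟨_, hf, -, -⟩ := hG_c.exists
  have hc : Val.ultralimit U G ∈ PhiE M qt .c f :=
    ⟨hf, .ultralimit (hG_c.mono fun _ hi => hi.2.1),
      Val.le_ultralimit (hG_c.mono fun _ hi => hi.2.2)⟩
  cases e
  case c => exact hc
  all_goals exact ⟨hc.1, hc.2.1, hc.2.2, .ultralimit (hG.mono fun _ hi => hi.2.2.2)⟩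

end Ultralimit

theorem exists_common_mem_of_finset {α β : Type*} {Φ : α → Set β} {Z : Set α}
    (hfin : ∀ (n : ℕ) (h : Fin n → α), (∀ i, h i ∈ Z) → (⋂ i, Φ (h i)).Nonempty)
    (s : Finset Z) : ∃ g, ∀ x ∈ s, g ∈ Φ x :=
  let ⟨g, hg⟩ := hfin s.card (fun i => s.equivFin.symm i) fun i => (s.equivFin.symm i).1.2
  ⟨g, fun x hx => by simpa using mem_iInter.1 hg (s.equivFin ⟨x, hx⟩)⟩

/-- **Compactness** (Lemma 11 of the paper).  Let `Y^T_{f_k} := {g ∈ B^T_M | f_k ≤ g}`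
and `e ∈ {c, K3, N3, Nve}`.  Then `Φ_e` is compact on `Y^T_{f_k}`: for every
`Z ⊆ Y^T_{f_k}`, if every finite family from `Z` has admissible extensions in common,
then so does all of `Z`. -/
theorem PhiE_compact {σ : Signature} {D : Type} (M : SupStructure σ D)
    (qt : Formula σ.T → Term σ.T) (code : Formula σ.T → D)
    (hgc : GoodCoding M code qt) (e : AdmE)
    (Y : Set (Val σ D)) (hYdef : Y = {g | g ∈ BT M qt ∧ Val.le M (fk M code) g}) :
    CompactOn (PhiE M qt e) Y := by
  intro Z _ hfin
  choose G hG using exists_common_mem_of_finset hfin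
  let U := Ultrafilter.of (atTop : Filter (Finset Z))
  refine ⟨Val.ultralimit U G, mem_iInter₂.2 fun h hh => ultralimit_mem_PhiE ?_⟩
  have hU : ∀ᶠ s in (U : Filter (Finset Z)), {⟨h, hh⟩} ≤ s :=
    Ultrafilter.of_le _ (eventually_ge_atTop _)
  exact hU.mono fun s hs => hG s ⟨h, hh⟩ (Finset.singleton_subset_iff.1 hs)
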